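/- Suppose b₁, b₂ : [0,T] × Ω → ℝ solve ∂t bⱼ = R(nⱼ, bⱼ, Nⱼ) with the same initial condition b₀, where R is globally Lipschitz in all arguments with constant L. Then for every T̃ ∈ (0,T], ‖b₁ - b₂‖²_{L∞(0,T̃;L∞(Ω))} ≤ C(L,T) T̃ ( ‖n₁ - n₂‖²_{L∞(0,T̃;L∞(Ω))} + ‖N₁ - N₂‖²_{L∞(0,T̃;L∞(Ω))} ). -/

import Mathlib

/-!
Fix `x`. The difference `d = b₁ - b₂` is the primitive of `R (n₁, b₁, N₁) - R (n₂, b₂, N₂)`,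
which the Lipschitz bound controls by `L |d| + L (Kn + KN)`. Grönwall's inequality in integral
form gives `|d t| ≤ L (Kn + KN) t exp (L t)`, and squaring, with `(Kn + KN)² ≤ 2 (Kn² + KN²)`
and `t² ≤ T T̃`, yields the estimate.
-/

open MeasureTheory Set Filter Topology Real

theorem continuousOn_primitive_of_intervalIntegrable {E : Type*} [NormedAddCommGroup E]
    [NormedSpace ℝ E] {μ : Measure ℝ} [NullSingletonClass μ] {f : ℝ → E} {a b : ℝ}
    (hf : IntervalIntegrable f μ a b) :
    ContinuousOn (fun t => ∫ s in a..t, f s ∂μ) (Icc a b) := by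
  rcases le_or_gt a b with hab | hba
  · rw [← uIcc_of_le hab]
    exact intervalIntegral.continuousOn_primitive_interval' hf left_mem_uIcc
  · simp [Icc_eq_empty_of_lt hba]

theorem le_gronwallBound_of_le_integral {f : ℝ → ℝ} {δ K ε a b : ℝ} (hK : 0 ≤ K)
    (hf : ContinuousOn f (Icc a b))
    (bound : ∀ t ∈ Icc a b, f t ≤ δ + ∫ s in a..t, (K * f s + ε)) :
    ∀ t ∈ Icc a b, f t ≤ gronwallBound δ K ε (t - a) := by
  rcases lt_or_ge b a with hba | hab
  · simp [Icc_eq_empty_of_lt hba]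
  -- The right-hand side `u` has right derivative `K * f t + ε ≤ K * u t + ε`.
  set u : ℝ → ℝ := fun t => δ + ∫ s in a..t, (K * f s + ε)
  have hcont : ContinuousOn (fun s => K * f s + ε) (Icc a b) := by fun_prop
  have hu_cont : ContinuousOn u (Icc a b) :=
    continuousOn_const.add
      (continuousOn_primitive_of_intervalIntegrable (hcont.intervalIntegrable_of_Icc hab))
  have hu_deriv : ∀ t ∈ Ico a b, HasDerivWithinAt u (K * f t + ε) (Ici t) t := by
    intro t ht
    have hmem : Icc a b ∈ 𝓝[>] t := Icc_mem_nhdsGT_of_mem ht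
    refine (intervalIntegral.integral_hasDerivWithinAt_right ?_
      ((hcont.stronglyMeasurableAtFilter_nhdsWithin measurableSet_Icc t).filter_mono
        (nhdsWithin_le_of_mem hmem))
      ((hcont t (Ico_subset_Icc_self ht)).mono_of_mem_nhdsWithin hmem)).const_add δ
    exact (hcont.mono (Icc_subset_Icc_right ht.2.le)).intervalIntegrable_of_Icc ht.1
  have hu_le := le_gronwallBound_of_liminf_deriv_right_le (δ := δ) hu_cont
    (fun t ht _ hr => (hu_deriv t ht).liminf_right_slope_le hr) (by simp [u])
    (fun t ht => by gcongr; exact bound t (Ico_subset_Icc_self ht))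
  exact fun t ht => (bound t ht).trans (hu_le t ht)

theorem abs_primitive_le_gronwallBound {g : ℝ → ℝ} {K ε a b : ℝ} (hK : 0 ≤ K)
    (hg : IntervalIntegrable g volume a b)
    (bound : ∀ s ∈ Icc a b, |g s| ≤ K * |∫ r in a..s, g r| + ε) :
    ∀ t ∈ Icc a b, |∫ s in a..t, g s| ≤ gronwallBound 0 K ε (t - a) := by
  have hF := continuousOn_primitive_of_intervalIntegrable hg
  refine le_gronwallBound_of_le_integral hK hF.abs fun t ht => ?_
  rw [zero_add]
  calc |∫ s in a..t, g s| ≤ ∫ s in a..t, |g s| :=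
        intervalIntegral.abs_integral_le_integral_abs ht.1
    _ ≤ ∫ s in a..t, (K * |∫ r in a..s, g r| + ε) :=
        intervalIntegral.integral_mono_on ht.1
          (hg.mono_set (uIcc_subset_uIcc left_mem_uIcc (mem_uIcc_of_le ht.1 ht.2))).abs
          (ContinuousOn.intervalIntegrable_of_Icc ht.1
            ((continuousOn_const.mul (hF.mono (Icc_subset_Icc_right ht.2)).abs).add
              continuousOn_const))
          fun s hs => bound s ⟨hs.1, hs.2.trans ht.2⟩

theorem exp_sub_one_le_mul_exp (x : ℝ) : exp x - 1 ≤ x * exp x := by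
  have h := mul_le_mul_of_nonneg_right (add_one_le_exp (-x)) (exp_pos x).le
  rw [← exp_add, neg_add_cancel, exp_zero] at h
  linarith

theorem gronwallBound_zero_le_mul_exp {K ε x : ℝ} (hK : 0 ≤ K) (hε : 0 ≤ ε) :
    gronwallBound 0 K ε x ≤ ε * x * exp (K * x) := by
  rcases hK.eq_or_lt with rfl | hK
  · simp [gronwallBound_K0]
  · simp only [gronwallBound_of_K_ne_0 hK.ne', zero_mul, zero_add]
    calc ε / K * (exp (K * x) - 1) ≤ ε / K * (K * x * exp (K * x)) := by
          gcongr; exact exp_sub_one_le_mul_exp _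
      _ = ε * x * exp (K * x) := by field_simp

theorem abs_sub_le_mul_exp_of_eq_integral {R : ℝ × ℝ × ℝ → ℝ} {L T Kn KN b₀ : ℝ}
    {n₁ n₂ N₁ N₂ b₁ b₂ : ℝ → ℝ} (hL : 0 ≤ L)
    (hR : ∀ p q : ℝ × ℝ × ℝ,
      |R p - R q| ≤ L * (|p.1 - q.1| + |p.2.1 - q.2.1| + |p.2.2 - q.2.2|))
    (hKn : 0 ≤ Kn) (hKN : 0 ≤ KN)
    (hb₁ : ∀ t ∈ Icc 0 T, b₁ t = b₀ + ∫ s in 0..t, R (n₁ s, b₁ s, N₁ s))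
    (hb₂ : ∀ t ∈ Icc 0 T, b₂ t = b₀ + ∫ s in 0..t, R (n₂ s, b₂ s, N₂ s))
    (hi₁ : IntervalIntegrable (fun s => R (n₁ s, b₁ s, N₁ s)) volume 0 T)
    (hi₂ : IntervalIntegrable (fun s => R (n₂ s, b₂ s, N₂ s)) volume 0 T)
    (hn : ∀ t ∈ Icc 0 T, |n₁ t - n₂ t| ≤ Kn) (hN : ∀ t ∈ Icc 0 T, |N₁ t - N₂ t| ≤ KN) :
    ∀ t ∈ Icc 0 T, |b₁ t - b₂ t| ≤ L * (Kn + KN) * t * exp (L * t) := by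
  set g : ℝ → ℝ := fun s => R (n₁ s, b₁ s, N₁ s) - R (n₂ s, b₂ s, N₂ s)
  have hb : ∀ t ∈ Icc 0 T, b₁ t - b₂ t = ∫ s in 0..t, g s := fun t ht => by
    have hsub : uIcc 0 t ⊆ uIcc 0 T := uIcc_subset_uIcc left_mem_uIcc (mem_uIcc_of_le ht.1 ht.2)
    rw [hb₁ t ht, hb₂ t ht, intervalIntegral.integral_sub (hi₁.mono_set hsub) (hi₂.mono_set hsub)]
    ring
  have hg : ∀ s ∈ Icc 0 T, |g s| ≤ L * |∫ r in 0..s, g r| + L * (Kn + KN) := fun s hs => by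
    rw [← hb s hs]
    have := mul_le_mul_of_nonneg_left (add_le_add (hn s hs) (hN s hs)) hL
    linarith [hR (n₁ s, b₁ s, N₁ s) (n₂ s, b₂ s, N₂ s)]
  intro t ht
  rw [hb t ht]
  simpa using (abs_primitive_le_gronwallBound hL (hi₁.sub hi₂) hg t ht).trans
    (gronwallBound_zero_le_mul_exp hL (by positivity))

theorem stmt2_general {Ω : Type*} [MeasureSpace Ω]
    (T L : ℝ) (hT : 0 < T) (hL : 0 ≤ L) :
    ∃ C > 0,
      ∀ (R : ℝ × ℝ × ℝ → ℝ),
        (∀ p q : ℝ × ℝ × ℝ,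
          |R p - R q| ≤ L * (|p.1 - q.1| + |p.2.1 - q.2.1| + |p.2.2 - q.2.2|)) →
      ∀ (b₀ : Ω → ℝ) (n₁ n₂ N₁ N₂ b₁ b₂ : ℝ → Ω → ℝ),
        (∀ x, ∀ t ∈ Icc (0:ℝ) T,
          b₁ t x = b₀ x + ∫ s in (0:ℝ)..t, R (n₁ s x, b₁ s x, N₁ s x)) →
        (∀ x, ∀ t ∈ Icc (0:ℝ) T,
          b₂ t x = b₀ x + ∫ s in (0:ℝ)..t, R (n₂ s x, b₂ s x, N₂ s x)) →
        (∀ x, ∀ t ∈ Icc (0:ℝ) T,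
          IntervalIntegrable (fun s => R (n₁ s x, b₁ s x, N₁ s x)) volume 0 t) →
        (∀ x, ∀ t ∈ Icc (0:ℝ) T,
          IntervalIntegrable (fun s => R (n₂ s x, b₂ s x, N₂ s x)) volume 0 t) →
      ∀ T' ∈ Ioc (0:ℝ) T, ∀ Kn KN : ℝ, 0 ≤ Kn → 0 ≤ KN →
        (∀ᵐ x, ∀ t ∈ Icc (0:ℝ) T',
          |n₁ t x - n₂ t x| ≤ Kn ∧ |N₁ t x - N₂ t x| ≤ KN) →
        ∀ᵐ x, ∀ t ∈ Icc (0:ℝ) T',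
          (b₁ t x - b₂ t x) ^ 2 ≤ C * T' * (Kn ^ 2 + KN ^ 2) := by
  -- Working with the Lipschitz constant `L + 1` keeps `C` positive when `L = 0`.
  refine ⟨2 * (L + 1) ^ 2 * T * exp ((L + 1) * T) ^ 2, by positivity, ?_⟩
  intro R hR b₀ n₁ n₂ N₁ N₂ b₁ b₂ hb₁ hb₂ hi₁ hi₂ T' ⟨hT'0, hT'T⟩ Kn KN hKn hKN hK
  have hR' : ∀ p q : ℝ × ℝ × ℝ,
      |R p - R q| ≤ (L + 1) * (|p.1 - q.1| + |p.2.1 - q.2.1| + |p.2.2 - q.2.2|) :=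
    fun p q => (hR p q).trans (by gcongr; linarith)
  have hsub : Icc 0 T' ⊆ Icc 0 T := Icc_subset_Icc_right hT'T
  filter_upwards [hK] with x hx t ⟨ht0, htT'⟩
  have hb := abs_sub_le_mul_exp_of_eq_integral (by positivity) hR' hKn hKN
    (fun t ht => hb₁ x t (hsub ht)) (fun t ht => hb₂ x t (hsub ht))
    (hi₁ x T' ⟨hT'0.le, hT'T⟩) (hi₂ x T' ⟨hT'0.le, hT'T⟩)
    (fun t ht => (hx t ht).1) (fun t ht => (hx t ht).2) t ⟨ht0, htT'⟩
  have htT : t ≤ T := htT'.trans hT'T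
  calc (b₁ t x - b₂ t x) ^ 2 ≤ ((L + 1) * (Kn + KN) * t * exp ((L + 1) * t)) ^ 2 := by
        rw [← sq_abs]; gcongr
    _ = (L + 1) ^ 2 * (Kn + KN) ^ 2 * (t * t) * exp ((L + 1) * t) ^ 2 := by ring
    _ ≤ (L + 1) ^ 2 * (2 * (Kn ^ 2 + KN ^ 2)) * (T * T') * exp ((L + 1) * T) ^ 2 := by
        gcongr; exact add_sq_le
    _ = 2 * (L + 1) ^ 2 * T * exp ((L + 1) * T) ^ 2 * T' * (Kn ^ 2 + KN ^ 2) := by ring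

/-- Stability of the cross-link ODE `∂ₜ bⱼ = R(nⱼ, bⱼ, Nⱼ)` with common initial data:
`‖b₁ - b₂‖²_{L∞(0,T̃;L∞)} ≤ C(L,T) T̃ (‖n₁-n₂‖²_{L∞L∞} + ‖N₁-N₂‖²_{L∞L∞})` for all `T̃ ∈ (0,T]`. -/
theorem stmt2 {Ω : Type*} [MeasureSpace Ω] [IsFiniteMeasure (volume : Measure Ω)]
    (T L : ℝ) (hT : 0 < T) (hL : 0 ≤ L) :
    ∃ C > 0,
      ∀ (R : ℝ × ℝ × ℝ → ℝ),
        (∀ p q : ℝ × ℝ × ℝ,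
          |R p - R q| ≤ L * (|p.1 - q.1| + |p.2.1 - q.2.1| + |p.2.2 - q.2.2|)) →
      ∀ (b₀ : Ω → ℝ) (n₁ n₂ N₁ N₂ b₁ b₂ : ℝ → Ω → ℝ),
        (∀ x, ∀ t ∈ Icc (0:ℝ) T,
          b₁ t x = b₀ x + ∫ s in (0:ℝ)..t, R (n₁ s x, b₁ s x, N₁ s x)) →
        (∀ x, ∀ t ∈ Icc (0:ℝ) T,
          b₂ t x = b₀ x + ∫ s in (0:ℝ)..t, R (n₂ s x, b₂ s x, N₂ s x)) →
        (∀ x, ∀ t ∈ Icc (0:ℝ) T,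
          IntervalIntegrable (fun s => R (n₁ s x, b₁ s x, N₁ s x)) volume 0 t) →
        (∀ x, ∀ t ∈ Icc (0:ℝ) T,
          IntervalIntegrable (fun s => R (n₂ s x, b₂ s x, N₂ s x)) volume 0 t) →
      ∀ T' ∈ Ioc (0:ℝ) T, ∀ Kn KN : ℝ, 0 ≤ Kn → 0 ≤ KN →
        (∀ᵐ x, ∀ t ∈ Icc (0:ℝ) T',
          |n₁ t x - n₂ t x| ≤ Kn ∧ |N₁ t x - N₂ t x| ≤ KN) →
        ∀ᵐ x, ∀ t ∈ Icc (0:ℝ) T',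
          (b₁ t x - b₂ t x) ^ 2 ≤ C * T' * (Kn ^ 2 + KN ^ 2) :=
  stmt2_general T L hT hL
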